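/- Let d > m ≥ 1 be integers with d and m both odd, t, c ∈ ℂ \ {0}, and Q(z) = t·z^d + c·z^m. Then both the positive real direction θ = 0 and the negative real direction θ = π are good rays for Q if and only if (Arg t, Arg c) belongs to the union of the two open squares (0,π)×(0,π) and (−π,0)×(−π,0), where Arg is the principal argument with values in (−π, π]. -/

import Mathlib

open Complex

/-- The direction `θ` (i.e. the ray `L(θ) = {r e^{iθ} : r > 0}`) is a *good ray* for the
binomial `Q(z) = t z^d + c z^m`:
(i) `L(θ)` is not a Stokes line of `t z^d dz²`;
(ii) `L(θ)` is not a Stokes line of `c z^m dz²`;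
(iii) `L(θ)` contains no turning point of `Q`;
(iv) `L(θ)` is not tangent to any vertical trajectory of `Q(z)dz²`. -/
def GoodRay (d m : ℕ) (t c : ℂ) (θ : ℝ) : Prop :=
  (¬ ∃ x : ℝ, x < 0 ∧ t * Complex.exp ((((d : ℝ) + 2) * θ : ℂ) * Complex.I) = (x : ℂ)) ∧
  (¬ ∃ x : ℝ, x < 0 ∧ c * Complex.exp ((((m : ℝ) + 2) * θ : ℂ) * Complex.I) = (x : ℂ)) ∧
  (∀ r : ℝ, 0 < r →
    t * ((r : ℂ) * Complex.exp ((θ : ℂ) * Complex.I)) ^ d +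
      c * ((r : ℂ) * Complex.exp ((θ : ℂ) * Complex.I)) ^ m ≠ 0) ∧
  (∀ r : ℝ, 0 < r → ¬ ∃ x : ℝ, x ≤ 0 ∧
    ((r : ℂ) * Complex.exp ((θ : ℂ) * Complex.I)) ^ 2 *
      (t * ((r : ℂ) * Complex.exp ((θ : ℂ) * Complex.I)) ^ d +
       c * ((r : ℂ) * Complex.exp ((θ : ℂ) * Complex.I)) ^ m) = (x : ℂ))

/-!
Since `d` and `m` are odd, the substitution `z ↦ -z` turns the ray `θ = π` for `(t, c)` into the
ray `θ = 0` for `(-t, -c)`. On the positive ray the four conditions say that `t`, `c` and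
`q(r) = t r^d + c r^m` avoid `(-∞, 0]`, so both rays are good exactly when `t`, `c` and every
`q(r)` are non-real. As `Im q(r) = r^m (Im t · r^(d-m) + Im c)` and `r^(d-m)` takes every positive
value, this means that `Im t` and `Im c` are nonzero with the same sign.
-/

open scoped ComplexOrder

namespace Complex

lemma exists_ofReal_eq_iff {p : ℝ → Prop} {z : ℂ} : (∃ x : ℝ, p x ∧ z = x) ↔ p z.re ∧ z.im = 0 :=
  ⟨fun ⟨_, hx, hz⟩ ↦ by simpa [hz] using hx, fun ⟨hp, hz⟩ ↦ ⟨z.re, hp, ext rfl (by simpa)⟩⟩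

lemma ofReal_mul_mem_slitPlane_iff {r : ℝ} (hr : 0 < r) {z : ℂ} :
    (r : ℂ) * z ∈ slitPlane ↔ z ∈ slitPlane := by
  simp only [mem_slitPlane_iff, re_ofReal_mul, im_ofReal_mul, mul_pos_iff_of_pos_left hr,
    mul_ne_zero_iff, ne_eq, hr.ne', not_false_eq_true, true_and]

lemma mem_slitPlane_iff_not_lt_zero {z : ℂ} (hz : z ≠ 0) : z ∈ slitPlane ↔ ¬z < 0 := by
  rw [mem_slitPlane_iff_not_le_zero, hz.le_iff_lt]

lemma mem_slitPlane_and_neg_mem_slitPlane_iff {z : ℂ} :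
    z ∈ slitPlane ∧ -z ∈ slitPlane ↔ z.im ≠ 0 := by
  simp only [mem_slitPlane_iff, neg_re, neg_im, neg_pos, ne_eq, neg_eq_zero]
  constructor
  · rintro ⟨h | h, h' | h'⟩ <;> first | assumption | linarith
  · intro h; exact ⟨Or.inr h, Or.inr h⟩

lemma exp_natCast_add_two_mul_pi_mul_I {n : ℕ} (hn : Odd n) :
    exp ((((n : ℝ) : ℂ) + 2) * (Real.pi : ℂ) * I) = -1 := by
  have h : (((n : ℝ) : ℂ) + 2) * (Real.pi : ℂ) * I = ((n + 2 : ℕ) : ℂ) * (Real.pi * I) := by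
    push_cast; ring
  rw [h, exp_nat_mul, exp_pi_mul_I, (hn.add_even even_two).neg_one_pow]

lemma arg_mem_Ioo_zero_pi_iff {z : ℂ} : arg z ∈ Set.Ioo 0 Real.pi ↔ 0 < z.im := by
  constructor
  · rintro ⟨h0, hπ⟩
    refine (arg_nonneg_iff.1 h0.le).lt_of_ne fun him ↦ ?_
    rcases arg_lt_pi_iff.1 hπ with hre | him'
    · exact h0.ne' (arg_eq_zero_iff.2 ⟨hre, him.symm⟩)
    · exact him' him.symm
  · intro h
    exact ⟨(arg_nonneg_iff.2 h.le).lt_of_ne fun h0 ↦ h.ne' (arg_eq_zero_iff.1 h0.symm).2,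
      arg_lt_pi_iff.2 (Or.inr h.ne')⟩

lemma arg_mem_Ioo_neg_pi_zero_iff {z : ℂ} : arg z ∈ Set.Ioo (-Real.pi) 0 ↔ z.im < 0 :=
  ⟨fun h ↦ arg_neg_iff.1 h.2, fun h ↦ ⟨neg_pi_lt_arg z, arg_neg_iff.2 h⟩⟩

end Complex

lemma forall_pos_mul_pow_add_mul_pow_ne_zero_iff {a b : ℝ} {d m : ℕ} (hmd : m < d) (ha : a ≠ 0)
    (hb : b ≠ 0) : (∀ r : ℝ, 0 < r → a * r ^ d + b * r ^ m ≠ 0) ↔ 0 < a * b := by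
  constructor
  · intro h
    by_contra! hab
    have hs : 0 < -b / a := by
      rw [show -b / a = -(a * b) / a ^ 2 by field_simp]
      exact div_pos (neg_pos.2 (hab.lt_of_ne (mul_ne_zero ha hb))) (by positivity)
    set r := (-b / a) ^ ((d - m : ℕ) : ℝ)⁻¹
    have hr : r ^ (d - m) = -b / a := Real.rpow_inv_natCast_pow hs.le (by omega)
    refine h r (Real.rpow_pos_of_pos hs _) ?_
    rw [← Nat.sub_add_cancel hmd.le, pow_add, hr]
    field_simp
    ring
  · intro hab r hr hzero
    have hpos : 0 < a * (a * r ^ d + b * r ^ m) := by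
      rw [show a * (a * r ^ d + b * r ^ m) = a ^ 2 * r ^ d + a * b * r ^ m by ring]
      positivity
    simp [hzero] at hpos

section GoodRay

variable {d m : ℕ} {t c : ℂ}

lemma goodRay_zero_iff (ht : t ≠ 0) (hc : c ≠ 0) :
    GoodRay d m t c 0 ↔ t ∈ slitPlane ∧ c ∈ slitPlane ∧
      ∀ r : ℝ, 0 < r → t * (r : ℂ) ^ d + c * (r : ℂ) ^ m ∈ slitPlane := by
  have hsq (r : ℝ) : (r : ℂ) ^ 2 = ((r ^ 2 : ℝ) : ℂ) := by push_cast; rfl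
  simp only [GoodRay, mul_zero, ofReal_zero, zero_mul, exp_zero, mul_one, exists_ofReal_eq_iff,
    ← neg_iff, ← nonpos_iff, ← mem_slitPlane_iff_not_le_zero, hsq]
  rw [← mem_slitPlane_iff_not_lt_zero ht, ← mem_slitPlane_iff_not_lt_zero hc]
  refine and_congr_right' (and_congr_right' ⟨fun ⟨_, h⟩ r hr ↦ ?_, fun h ↦ ⟨?_, ?_⟩⟩)
  · exact (ofReal_mul_mem_slitPlane_iff (by positivity)).1 (h r hr)
  · exact fun r hr ↦ slitPlane_ne_zero (h r hr)
  · exact fun r hr ↦ (ofReal_mul_mem_slitPlane_iff (by positivity)).2 (h r hr)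

lemma goodRay_pi_iff (hd : Odd d) (hm : Odd m) :
    GoodRay d m t c Real.pi ↔ GoodRay d m (-t) (-c) 0 := by
  simp only [GoodRay, exp_natCast_add_two_mul_pi_mul_I hd, exp_natCast_add_two_mul_pi_mul_I hm,
    exp_pi_mul_I, mul_zero, ofReal_zero, zero_mul, exp_zero, mul_one, hd.neg_pow,
    hm.neg_pow, neg_mul, mul_neg, neg_sq]

lemma goodRay_zero_and_goodRay_zero_neg_iff (ht : t ≠ 0) (hc : c ≠ 0) :
    GoodRay d m t c 0 ∧ GoodRay d m (-t) (-c) 0 ↔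
      t.im ≠ 0 ∧ c.im ≠ 0 ∧ ∀ r : ℝ, 0 < r → t.im * r ^ d + c.im * r ^ m ≠ 0 := by
  have hneg (r : ℝ) :
      -t * (r : ℂ) ^ d + -c * (r : ℂ) ^ m = -(t * (r : ℂ) ^ d + c * (r : ℂ) ^ m) := by
    ring
  have him (r : ℝ) : (t * (r : ℂ) ^ d + c * (r : ℂ) ^ m).im = t.im * r ^ d + c.im * r ^ m := by
    simp [← ofReal_pow]
  simp only [goodRay_zero_iff ht hc, goodRay_zero_iff (neg_ne_zero.2 ht) (neg_ne_zero.2 hc), hneg,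
    ← him, ← mem_slitPlane_and_neg_mem_slitPlane_iff, imp_and, forall_and]
  tauto

end GoodRay

theorem both_real_rays_good_iff_odd_odd_general
    (d m : ℕ) (hdm : m < d) (hd_odd : Odd d) (hm_odd : Odd m)
    (t c : ℂ) (ht : t ≠ 0) (hc : c ≠ 0) :
    (GoodRay d m t c 0 ∧ GoodRay d m t c Real.pi) ↔
      ((Complex.arg t ∈ Set.Ioo 0 Real.pi ∧ Complex.arg c ∈ Set.Ioo 0 Real.pi) ∨
       (Complex.arg t ∈ Set.Ioo (-Real.pi) 0 ∧ Complex.arg c ∈ Set.Ioo (-Real.pi) 0)) := by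
  rw [goodRay_pi_iff hd_odd hm_odd, goodRay_zero_and_goodRay_zero_neg_iff ht hc,
    arg_mem_Ioo_zero_pi_iff, arg_mem_Ioo_zero_pi_iff, arg_mem_Ioo_neg_pi_zero_iff,
    arg_mem_Ioo_neg_pi_zero_iff, ← mul_pos_iff]
  constructor
  · rintro ⟨ht', hc', hq⟩
    exact (forall_pos_mul_pow_add_mul_pow_ne_zero_iff hdm ht' hc').1 hq
  · intro h
    have ht' := left_ne_zero_of_mul h.ne'
    have hc' := right_ne_zero_of_mul h.ne'
    exact ⟨ht', hc', (forall_pos_mul_pow_add_mul_pow_ne_zero_iff hdm ht' hc').2 h⟩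

/-- For `d` and `m` both odd, both real rays (positive, `θ = 0`, and negative, `θ = π`)
are good for `Q = t z^d + c z^m` if and only if `(Arg t, Arg c)` belongs to the union of
the two open squares `(0,π)² ∪ (−π,0)²`. -/
theorem both_real_rays_good_iff_odd_odd
    (d m : ℕ) (hm : 1 ≤ m) (hdm : m < d) (hd_odd : Odd d) (hm_odd : Odd m)
    (t c : ℂ) (ht : t ≠ 0) (hc : c ≠ 0) :
    (GoodRay d m t c 0 ∧ GoodRay d m t c Real.pi) ↔
      ((Complex.arg t ∈ Set.Ioo 0 Real.pi ∧ Complex.arg c ∈ Set.Ioo 0 Real.pi) ∨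
       (Complex.arg t ∈ Set.Ioo (-Real.pi) 0 ∧ Complex.arg c ∈ Set.Ioo (-Real.pi) 0)) :=
  both_real_rays_good_iff_odd_odd_general d m hdm hd_odd hm_odd t c ht hc
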